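/- arXiv:2310.00621 — 3 statements merged into one kernel-verified Lean document; each statement's English description precedes it below -/
import Mathlib

section
/- Any space of homogeneous type (X,d,μ) is outer regular on Borel sets: for every Borel set E ⊆ X one has μ(E) = inf{ μ(G) : G open, G ⊇ E }. -/
open MeasureTheory Filter Set Topology
open scoped ENNReal

/-- A quasi-distance on `X` with quasi-triangle constant `K`. -/
structure IsQuasiDist {X : Type*} (d : X → X → ℝ) (K : ℝ) : Prop where
  nonneg : ∀ x y, 0 ≤ d x y
  eq_zero_iff : ∀ x y, d x y = 0 ↔ x = y
  symm : ∀ x y, d x y = d y x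
  one_le_K : 1 ≤ K
  triangle : ∀ x y z, d x y ≤ K * (d x z + d z y)

/-- The topology on `X` is the one induced by the quasi-distance `d`:
a set is open iff around any of its points it contains a `d`-ball. -/
def InducedByQuasiDist {X : Type*} [TopologicalSpace X] (d : X → X → ℝ) : Prop :=
  ∀ G : Set X, IsOpen G ↔ ∀ x ∈ G, ∃ r > 0, {y | d y x < r} ⊆ G

/-- `SetSep d A B` means `dist(A,B) > 0`.  The relation `A ⋐ B` of the paper is
`SetSep d A Bᶜ`. -/
def SetSep {X : Type*} (d : X → X → ℝ) (A B : Set X) : Prop :=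
  ∃ δ > 0, ∀ x ∈ A, ∀ y ∈ B, δ ≤ d x y

/-- `(X,d,μ)` is a space of homogeneous type: `d` is a quasi-distance inducing the
topology of `X`, the σ-algebra contains all Borel sets and all balls, and `μ`
satisfies the doubling condition `μ(B(x,2r)) ≤ C·μ(B(x,r)) < ∞`. -/
structure IsHomType {X : Type*} [TopologicalSpace X] [MeasurableSpace X]
    (d : X → X → ℝ) (μ : Measure X) (K : ℝ) (C : ℝ≥0∞) : Prop where
  quasi : IsQuasiDist d K
  induced : InducedByQuasiDist d
  open_meas : ∀ G : Set X, IsOpen G → MeasurableSet G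
  ball_meas : ∀ x r, MeasurableSet {y | d y x < r}
  doubling : ∀ x r, 0 < r → μ {y | d y x < 2 * r} ≤ C * μ {y | d y x < r}
  ball_lt_top : ∀ x r, 0 < r → μ {y | d y x < r} < ⊤

variable {X : Type*}

/-- `U` is a sequence of linear operators `L¹(X) → M(X)`: each `U n` is linear on
integrable functions, respects a.e. equality of integrable functions, and sends
integrable functions to measurable functions. -/
structure OpSeq [MeasurableSpace X] (μ : Measure X) (U : ℕ → (X → ℝ) → X → ℝ) : Prop where
  lin : ∀ n (f g : X → ℝ) (a b : ℝ), Integrable f μ → Integrable g μ →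
    U n (fun x => a * f x + b * g x) = fun x => a * U n f x + b * U n g x
  congr : ∀ n (f g : X → ℝ), Integrable f μ → f =ᵐ[μ] g → U n f = U n g
  meas : ∀ n (f : X → ℝ), Integrable f μ → Measurable (U n f)

/-- Property (P1): each `U n` is bounded from `L¹(X)` to `M(X)`. -/
def PropP1 [MeasurableSpace X] (μ : Measure X) (U : ℕ → (X → ℝ) → X → ℝ) : Prop :=
  ∀ n, ∃ ρ : ℝ, ∀ f : X → ℝ, Integrable f μ → ∀ x, |U n f x| ≤ ρ * ∫ y, |f y| ∂μ

/-- Property (P2): the `U n` are uniformly bounded from `L^∞(X)` to `M(X)`. -/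
def PropP2 [MeasurableSpace X] (μ : Measure X) (U : ℕ → (X → ℝ) → X → ℝ) : Prop :=
  ∃ ϱ : ℝ, ∀ n (f : X → ℝ), Integrable f μ → ∀ M : ℝ, (∀ x, |f x| ≤ M) →
    ∀ x, |U n f x| ≤ ϱ * M

/-- Property (P3): if `f ∈ L¹(X)` is constant on an open set `G`, then `U n f`
converges uniformly on every set `E ⋐ G`. -/
def PropP3 [TopologicalSpace X] [MeasurableSpace X] (d : X → X → ℝ) (μ : Measure X)
    (U : ℕ → (X → ℝ) → X → ℝ) : Prop :=
  ∀ f : X → ℝ, Integrable f μ → ∀ G : Set X, IsOpen G → ∀ c : ℝ, (∀ x ∈ G, f x = c) →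
    ∀ E : Set X, SetSep d E Gᶜ →
      ∃ g : X → ℝ, TendstoUniformlyOn (fun n x => U n f x) g atTop E

/-- Property (P4): if `G` is open with `μ G < ∞` then `U n 𝟙_G → 𝟙_G` a.e. -/
def PropP4 [TopologicalSpace X] [MeasurableSpace X] (μ : Measure X)
    (U : ℕ → (X → ℝ) → X → ℝ) : Prop :=
  ∀ G : Set X, IsOpen G → μ G < ⊤ →
    ∀ᵐ x ∂μ, Tendsto (fun n => U n (G.indicator fun _ => (1 : ℝ)) x) atTop
      (𝓝 (G.indicator (fun _ => (1 : ℝ)) x))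

/-- The set `λ(A) = A ∪ {x : limsup |U n 𝟙_A (x)| > 0}`. -/
noncomputable def lambdaSet (U : ℕ → (X → ℝ) → X → ℝ) (A : Set X) : Set X :=
  A ∪ {x | 0 < Filter.limsup (fun n => ((|U n (A.indicator fun _ => (1 : ℝ)) x| : ℝ) : EReal)) atTop}

/-- The combined operator `U_{(Ω,ν)}(f)(x) = Σ_k U_{ν(ω_k)}(f)(x)·𝟙_{ω_k}(x)`. -/
noncomputable def UPart (U : ℕ → (X → ℝ) → X → ℝ) (ω : ℕ → Set X) (ν : ℕ → ℕ)
    (f : X → ℝ) (x : X) : ℝ :=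
  ∑' k, (ω k).indicator (U (ν k) f) x

/-! The balls of a quasi-distance need not be open, but by the quasi-triangle inequality the
`d`-interior of every set is open, so the balls still form a neighbourhood basis. Hence a closed
set is the intersection of the interiors of its `1/(n+1)`-neighbourhoods, i.e. every open set is
an increasing union of closed sets, and every finite Borel measure is weakly regular. The measure
trimmed to the Borel sets is finite on the interiors of the balls `B(x₀, n + 1)`, which are open
and cover `X`, so it is outer regular. -/

namespace IsQuasiDist

variable {d : X → X → ℝ} {K : ℝ}

lemma ball_subset_ball (hd : IsQuasiDist d K) (x x₀ : X) (r : ℝ) :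
    {y | d y x < r} ⊆ {y | d y x₀ < K * (r + d x x₀)} := fun y hy =>
  (hd.triangle y x₀ x).trans_lt <|
    mul_lt_mul_of_pos_left (add_lt_add_of_lt_of_le hy le_rfl) (one_pos.trans_le hd.one_le_K)

variable [TopologicalSpace X]

lemma isOpen_setOf_ball_subset (hd : IsQuasiDist d K) (hi : InducedByQuasiDist d) (A : Set X) :
    IsOpen {x | ∃ r > 0, {y | d y x < r} ⊆ A} := by
  have hK : 0 < K := one_pos.trans_le hd.one_le_K
  refine (hi _).2 fun x ⟨r, hr, hrA⟩ => ⟨r / (2 * K), by positivity, fun z hz => ?_⟩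
  refine ⟨r / (2 * K), by positivity, (hd.ball_subset_ball z x _).trans fun y hy => hrA ?_⟩
  have hz : d z x < r / (2 * K) := hz
  calc d y x < K * (r / (2 * K) + d z x) := hy
    _ ≤ K * (r / (2 * K) + r / (2 * K)) := by gcongr
    _ = r := by field_simp; ring

lemma hasBasis_nhds (hd : IsQuasiDist d K) (hi : InducedByQuasiDist d) (x : X) :
    (𝓝 x).HasBasis (fun r : ℝ => 0 < r) (fun r => {y | d y x < r}) := by
  refine ⟨fun s => ⟨fun hs => ?_, fun ⟨r, hr, hrs⟩ => ?_⟩⟩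
  · obtain ⟨t, hts, ht, hxt⟩ := mem_nhds_iff.1 hs
    obtain ⟨r, hr, hrt⟩ := (hi t).1 ht x hxt
    exact ⟨r, hr, hrt.trans hts⟩
  · refine mem_nhds_iff.2 ⟨{x | ∃ r > 0, {y | d y x < r} ⊆ s}, fun y ⟨ρ, hρ, hρs⟩ => hρs ?_,
      hd.isOpen_setOf_ball_subset hi s, ⟨r, hr, hrs⟩⟩
    simpa [(hd.eq_zero_iff y y).2 rfl] using hρ

lemma ball_mem_nhds (hd : IsQuasiDist d K) (hi : InducedByQuasiDist d) (x : X) {r : ℝ}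
    (hr : 0 < r) : {y | d y x < r} ∈ 𝓝 x :=
  (hd.hasBasis_nhds hi x).mem_of_mem hr

lemma iInter_interior_thickening (hd : IsQuasiDist d K) (hi : InducedByQuasiDist d)
    {F : Set X} (hF : IsClosed F) :
    ⋂ n : ℕ, interior {z | ∃ y ∈ F, d z y < 1 / (n + 1)} = F := by
  refine Subset.antisymm (fun z hz => ?_) fun y hy => mem_iInter.2 fun n => ?_
  · refine hF.closure_subset_iff.2 subset_rfl <|
      (mem_closure_iff_nhds_basis (hd.hasBasis_nhds hi z)).2 fun r hr => ?_
    obtain ⟨n, hn⟩ := exists_nat_one_div_lt hr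
    obtain ⟨y, hyF, hzy⟩ := interior_subset (mem_iInter.1 hz n)
    exact ⟨y, hyF, (hd.symm y z ▸ hzy.trans hn : d y z < r)⟩
  · exact mem_interior_iff_mem_nhds.2 <|
      Filter.mem_of_superset (hd.ball_mem_nhds hi y Nat.one_div_pos_of_nat) fun z hz => ⟨y, hy, hz⟩

lemma innerRegularWRT_isClosed_isOpen [MeasurableSpace X] (hd : IsQuasiDist d K)
    (hi : InducedByQuasiDist d) (μ : Measure X) : μ.InnerRegularWRT IsClosed IsOpen := by
  intro U hU r hr
  set F : ℕ → Set X := fun n => (interior {z | ∃ y ∈ Uᶜ, d z y < 1 / (n + 1)})ᶜ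
  have hF_mono : Monotone F := fun m n hmn => compl_subset_compl.2 <| interior_mono
    fun z ⟨y, hy, hzy⟩ => ⟨y, hy, hzy.trans_le (Nat.one_div_le_one_div hmn)⟩
  have hF_iUnion : ⋃ n, F n = U := by
    rw [← compl_iInter, hd.iInter_interior_thickening hi hU.isClosed_compl, compl_compl]
  rw [← hF_iUnion, hF_mono.measure_iUnion] at hr
  obtain ⟨n, hn⟩ := lt_iSup_iff.1 hr
  exact ⟨F n, hF_iUnion ▸ subset_iUnion F n, isOpen_interior.isClosed_compl, hn⟩

lemma iUnion_interior_ball_eq_univ (hd : IsQuasiDist d K) (hi : InducedByQuasiDist d) (x₀ : X) :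
    ⋃ n : ℕ, interior {y | d y x₀ < n + 1} = univ := by
  refine eq_univ_of_forall fun x => ?_
  obtain ⟨n, hn⟩ := exists_nat_ge (K * (1 + d x x₀))
  refine mem_iUnion.2 ⟨n, mem_interior_iff_mem_nhds.2 ?_⟩
  refine Filter.mem_of_superset (hd.ball_mem_nhds hi x one_pos) ?_
  exact (hd.ball_subset_ball x x₀ 1).trans fun y (hy : d y x₀ < _) => show d y x₀ < n + 1 by linarith

lemma outerRegular [MeasurableSpace X] [BorelSpace X] (hd : IsQuasiDist d K)
    (hi : InducedByQuasiDist d) (μ : Measure X)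
    (hμ : ∀ x r, 0 < r → μ (interior {y | d y x < r}) < ∞) : μ.OuterRegular := by
  obtain hX | ⟨⟨x₀⟩⟩ := isEmpty_or_nonempty X
  · exact ⟨fun A _ r hr => ⟨A, subset_rfl, A.eq_empty_of_isEmpty ▸ isOpen_empty, hr⟩⟩
  refine Measure.OuterRegular.of_restrict (fun n => ?_) (fun n => isOpen_interior)
    (hd.iUnion_interior_ball_eq_univ hi x₀).ge
  have : IsFiniteMeasure (μ.restrict (interior {y | d y x₀ < n + 1})) :=
    isFiniteMeasure_restrict.2 (hμ x₀ _ (by positivity)).ne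
  exact (Measure.InnerRegularWRT.weaklyRegular_of_finite _
    (hd.innerRegularWRT_isClosed_isOpen hi _)).toOuterRegular

end IsQuasiDist

lemma Set.measure_eq_iInf_isOpen_of_outerRegular_trim [TopologicalSpace X]
    {m : MeasurableSpace X} (hm : borel X ≤ m) {μ : Measure X}
    (hμ : @Measure.OuterRegular X (borel X) _ (μ.trim hm)) {E : Set X}
    (hE : MeasurableSet[borel X] E) :
    μ E = ⨅ (G : Set X) (_ : IsOpen G) (_ : E ⊆ G), μ G := by
  rw [← trim_measurableSet_eq hm hE, @Set.measure_eq_iInf_isOpen X (borel X) _ E _ hμ,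
    iInf_congr fun G => iInf_comm]
  refine iInf_congr fun G => iInf_congr fun hG => iInf_congr fun _ => ?_
  exact trim_measurableSet_eq hm (MeasurableSpace.measurableSet_generateFrom hG)

/-- **Lemma (outer regularity).**  Every space of homogeneous type is outer regular
on Borel sets: `μ E = inf { μ G : G open, E ⊆ G }`. -/
theorem stmt5 [TopologicalSpace X] [MeasurableSpace X] (d : X → X → ℝ) (μ : Measure X)
    (K : ℝ) (C : ℝ≥0∞) (hX : IsHomType d μ K C)
    (E : Set X) (hE : MeasurableSet[borel X] E) :
    μ E = ⨅ (G : Set X) (_ : IsOpen G) (_ : E ⊆ G), μ G := by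
  have hm : borel X ≤ ‹MeasurableSpace X› := MeasurableSpace.generateFrom_le hX.open_meas
  refine Set.measure_eq_iInf_isOpen_of_outerRegular_trim hm ?_ hE
  refine @IsQuasiDist.outerRegular X _ _ _ (borel X) (@BorelSpace.mk X _ (borel X) rfl)
    hX.quasi hX.induced _ fun x r hr => ?_
  rw [trim_measurableSet_eq hm (MeasurableSpace.measurableSet_generateFrom isOpen_interior)]
  exact (measure_mono interior_subset).trans_lt (hX.ball_lt_top x r hr)
end

section
/- Any open set B in a space of homogeneous type (X,d,μ) admits a regular partition: there exist pairwise disjoint Borel sets ω_k, k = 1,2,…, with ∪_k ω_k = B, and open sets V_k with ω_k ⋐ V_k ⊆ B such that each V_k intersects only finitely many of the sets V_j. -/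
open MeasureTheory Filter Set Topology
open scoped ENNReal

variable {X : Type*}

private lemma chain_ineq' {X : Type*} {d : X → X → ℝ} {K β : ℝ}
    (hq : IsQuasiDist d K) (hβ : 0 < β) (hL : (4 * K ^ 2) ^ β = (2:ℝ)) :
    ∀ n (c : ℕ → X),
      d (c 0) (c n) ^ β ≤ 2 * ∑ i ∈ Finset.range n, d (c i) (c (i + 1)) ^ β := by
  intro n
  induction n using Nat.strong_induction_on with
  | _ n IH =>
    intro c
    rcases Nat.eq_zero_or_pos n with hn | hn
    · subst hn
      simp [(hq.eq_zero_iff (c 0) (c 0)).mpr rfl, Real.zero_rpow hβ.ne']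
    · classical
      set S := ∑ i ∈ Finset.range n, d (c i) (c (i + 1)) ^ β with hSdef
      have hterm : ∀ i, 0 ≤ d (c i) (c (i + 1)) ^ β :=
        fun i => Real.rpow_nonneg (hq.nonneg _ _) _
      have hS0 : 0 ≤ S := Finset.sum_nonneg fun i _ => hterm i
      rcases eq_or_lt_of_le hS0 with hS | hS
      · -- all terms zero
        have hall : ∀ i ∈ Finset.range n, d (c i) (c (i + 1)) ^ β = 0 :=
          (Finset.sum_eq_zero_iff_of_nonneg (fun i _ => hterm i)).mp hS.symm
        have heq : ∀ i, i < n → c (i + 1) = c i := by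
          intro i hi
          have h0 : d (c i) (c (i + 1)) = 0 := by
            have := hall i (Finset.mem_range.mpr hi)
            have h1 := (Real.rpow_eq_zero_iff_of_nonneg (hq.nonneg (c i) (c (i+1)))).mp this
            exact h1.1
          exact ((hq.eq_zero_iff _ _).mp h0).symm
        have hcn : ∀ m, m ≤ n → c m = c 0 := by
          intro m
          induction m with
          | zero => intro _; rfl
          | succ k ih => intro hk; rw [heq k (by omega), ih (by omega)]
        rw [hcn n le_rfl, (hq.eq_zero_iff (c 0) (c 0)).mpr rfl,
          Real.zero_rpow hβ.ne', ← hS]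
        norm_num
      · set P : ℕ → Prop := fun m => ∑ i ∈ Finset.range m, d (c i) (c (i + 1)) ^ β ≤ S / 2
          with hPdef
        have hP0 : P 0 := by simp [hPdef]; positivity
        set m := Nat.findGreatest P (n - 1) with hm
        have hmle : m ≤ n - 1 := Nat.findGreatest_le _
        have hmn : m < n := by omega
        have hPm : P m := Nat.findGreatest_spec (Nat.zero_le _) hP0
        have hpre : ∑ i ∈ Finset.range m, d (c i) (c (i + 1)) ^ β ≤ S / 2 := hPm
        have hsplit : (∑ i ∈ Finset.range (m + 1), d (c i) (c (i + 1)) ^ β)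
            + ∑ i ∈ Finset.Ico (m + 1) n, d (c i) (c (i + 1)) ^ β = S := by
          rw [Finset.range_eq_Ico, hSdef, Finset.range_eq_Ico]
          exact Finset.sum_Ico_consecutive _ (Nat.zero_le _) (by omega)
        have hsuf : ∑ i ∈ Finset.Ico (m + 1) n, d (c i) (c (i + 1)) ^ β ≤ S / 2 := by
          rcases eq_or_lt_of_le (show m + 1 ≤ n by omega) with h | h
          · rw [← h]; simp; positivity
          · have hnot : ¬ P (m + 1) :=
              Nat.findGreatest_is_greatest (n := n - 1) (by omega) (by omega)
            have h2 : S / 2 < ∑ i ∈ Finset.range (m + 1), d (c i) (c (i + 1)) ^ β :=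
              lt_of_not_ge hnot
            linarith
        -- key conversion
        have hkey : ∀ a : ℝ, 0 ≤ a → a ^ β ≤ S → a ≤ S ^ (1 / β) := by
          intro a ha h
          have h1 := Real.rpow_le_rpow (Real.rpow_nonneg ha β) h
            (by positivity : (0:ℝ) ≤ 1 / β)
          rwa [← Real.rpow_mul ha, mul_one_div_cancel hβ.ne', Real.rpow_one] at h1
        have h1 : d (c 0) (c m) ^ β ≤ S := by
          calc d (c 0) (c m) ^ β ≤ 2 * ∑ i ∈ Finset.range m, d (c i) (c (i + 1)) ^ β :=
                IH m hmn c
          _ ≤ 2 * (S / 2) := by linarith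
          _ = S := by ring
        have h2 : d (c (m + 1)) (c n) ^ β ≤ S := by
          have hih := IH (n - (m + 1)) (by omega) (fun i => c (m + 1 + i))
          have he : m + 1 + (n - (m + 1)) = n := by omega
          rw [he] at hih
          have hsum : ∑ i ∈ Finset.range (n - (m + 1)), d (c (m + 1 + i)) (c (m + 1 + i + 1)) ^ β
              = ∑ i ∈ Finset.Ico (m + 1) n, d (c i) (c (i + 1)) ^ β := by
            rw [Finset.sum_Ico_eq_sum_range]
          calc d (c (m+1)) (c n) ^ β
              ≤ 2 * ∑ i ∈ Finset.range (n - (m + 1)), d (c (m + 1 + i)) (c (m + 1 + i + 1)) ^ β := hih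
          _ = 2 * ∑ i ∈ Finset.Ico (m + 1) n, d (c i) (c (i + 1)) ^ β := by rw [hsum]
          _ ≤ 2 * (S / 2) := by linarith
          _ = S := by ring
        have hmid : d (c m) (c (m + 1)) ^ β ≤ S := by
          rw [hSdef]
          exact Finset.single_le_sum (fun i _ => hterm i) (Finset.mem_range.mpr hmn)
        have hs : (0:ℝ) ≤ S ^ (1 / β) := Real.rpow_nonneg hS0 _
        have hA := hkey _ (hq.nonneg (c 0) (c m)) h1
        have hB := hkey _ (hq.nonneg (c m) (c (m+1))) hmid
        have hC := hkey _ (hq.nonneg (c (m+1)) (c n)) h2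
        have hK := hq.one_le_K
        have hKnn : (0:ℝ) ≤ K := by linarith
        have hfin : d (c 0) (c n) ≤ 4 * K ^ 2 * S ^ (1 / β) := by
          have t1 := hq.triangle (c 0) (c n) (c m)
          have t2 := hq.triangle (c m) (c n) (c (m + 1))
          have e1 : d (c m) (c n) ≤ 2 * K * S ^ (1 / β) := by
            calc d (c m) (c n) ≤ K * (d (c m) (c (m + 1)) + d (c (m + 1)) (c n)) := t2
            _ ≤ K * (S ^ (1 / β) + S ^ (1 / β)) :=
                mul_le_mul_of_nonneg_left (add_le_add hB hC) hKnn
            _ = 2 * K * S ^ (1 / β) := by ring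
          have e0 : 0 ≤ (2 * K ^ 2 - K) * S ^ (1 / β) :=
            mul_nonneg (by nlinarith) hs
          calc d (c 0) (c n) ≤ K * (d (c 0) (c m) + d (c m) (c n)) := t1
          _ ≤ K * (S ^ (1 / β) + 2 * K * S ^ (1 / β)) :=
              mul_le_mul_of_nonneg_left (add_le_add hA e1) hKnn
          _ ≤ 4 * K ^ 2 * S ^ (1 / β) := by nlinarith
        have hstep : d (c 0) (c n) ^ β ≤ (4 * K ^ 2 * S ^ (1 / β)) ^ β :=
          Real.rpow_le_rpow (hq.nonneg _ _) hfin hβ.le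
        calc d (c 0) (c n) ^ β ≤ (4 * K ^ 2 * S ^ (1 / β)) ^ β := hstep
        _ = (4 * K ^ 2) ^ β * (S ^ (1 / β)) ^ β :=
            Real.mul_rpow (by positivity) hs
        _ = 2 * S := by
            rw [hL, ← Real.rpow_mul hS0, one_div_mul_cancel hβ.ne', Real.rpow_one]

/-- **Lemma (regular partitions exist).**  Any open set `B` in a space of
homogeneous type admits a regular partition: pairwise disjoint Borel sets `ω k`
with `⋃ k, ω k = B`, together with open sets `V k` satisfying `ω k ⋐ V k ⊆ B`,
each `V k` meeting only finitely many of the `V j`. -/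
theorem stmt7 [TopologicalSpace X] [MeasurableSpace X] (d : X → X → ℝ) (μ : Measure X)
    (K : ℝ) (C : ℝ≥0∞) (hX : IsHomType d μ K C)
    (B : Set X) (hB : IsOpen B) :
    ∃ ω V : ℕ → Set X,
      (∀ k, MeasurableSet[borel X] (ω k)) ∧
      Pairwise (fun i j => Disjoint (ω i) (ω j)) ∧
      (⋃ k, ω k) = B ∧
      (∀ k, IsOpen (V k)) ∧
      (∀ k, SetSep d (ω k) (V k)ᶜ) ∧
      (∀ k, V k ⊆ B) ∧
      (∀ k, {j | (V j ∩ V k).Nonempty}.Finite) := by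
  classical
  have hq := hX.quasi
  have hK := hq.one_le_K
  rcases Set.eq_empty_or_nonempty Bᶜ with hc | hc
  · -- B = univ
    have hBu : B = Set.univ := Set.compl_empty_iff.mp hc
    refine ⟨fun k => if k = 0 then Set.univ else ∅,
            fun k => if k = 0 then Set.univ else ∅, ?_, ?_, ?_, ?_, ?_, ?_, ?_⟩
    · intro k; dsimp only; split_ifs
      · exact @MeasurableSet.univ X (borel X)
      · exact @MeasurableSet.empty X (borel X)
    · intro i j hij
      rcases eq_or_ne i 0 with hi | hi <;> rcases eq_or_ne j 0 with hj | hj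
      · exact absurd (hi.trans hj.symm) hij
      · simp [hi, hj]
      · simp [hi, hj]
      · simp [hi, hj]
    · rw [hBu]
      apply Set.eq_univ_of_univ_subset
      intro x _
      exact Set.mem_iUnion.mpr ⟨0, by simp⟩
    · intro k; dsimp only; split_ifs
      · exact isOpen_univ
      · exact isOpen_empty
    · intro k
      refine ⟨1, one_pos, ?_⟩
      dsimp only; split_ifs with h
      · intro x _ y hy; simp at hy
      · intro x hx; simp at hx
    · intro k; rw [hBu]; exact Set.subset_univ _
    · intro k
      apply Set.Finite.subset (Set.finite_singleton 0)
      intro j hj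
      simp only [Set.mem_setOf_eq] at hj
      by_contra hj0
      simp only [Set.mem_singleton_iff] at hj0
      rw [if_neg hj0] at hj
      simp at hj
  · -- B ≠ univ
    set β : ℝ := Real.logb (4 * K ^ 2) 2 with hβdef
    have hKpos : (0:ℝ) < 4 * K ^ 2 := by positivity
    have hK1 : (1:ℝ) < 4 * K ^ 2 := by nlinarith
    have hβ : 0 < β := Real.logb_pos hK1 one_lt_two
    have hL : (4 * K ^ 2) ^ β = (2:ℝ) := Real.rpow_logb hKpos (by linarith) two_pos
    set ρ : X → X → ℝ := fun x y => d x y ^ β with hρdef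
    have hρnn : ∀ x y, 0 ≤ ρ x y := fun x y => Real.rpow_nonneg (hq.nonneg x y) _
    have hρsymm : ∀ x y, ρ x y = ρ y x := fun x y => by rw [hρdef]; simp [hq.symm x y]
    have hρself : ∀ x, ρ x x = 0 := fun x => by
      simp [hρdef, (hq.eq_zero_iff x x).mpr rfl, Real.zero_rpow hβ.ne']
    set T : X → Set ℝ := fun x =>
      {t | ∃ (n : ℕ) (c : ℕ → X), c 0 = x ∧ c n ∈ Bᶜ ∧
            t = ∑ i ∈ Finset.range n, ρ (c i) (c (i + 1))} with hTdef
    have hTne : ∀ x, (T x).Nonempty := by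
      intro x
      obtain ⟨y, hy⟩ := hc
      exact ⟨∑ i ∈ Finset.range 1, ρ ((fun i => if i = 0 then x else y) i)
          ((fun i => if i = 0 then x else y) (i + 1)),
        1, fun i => if i = 0 then x else y, by simp, by simp [hy], rfl⟩
    have hTnn : ∀ x, ∀ t ∈ T x, 0 ≤ t := by
      rintro x t ⟨n, c, -, -, rfl⟩
      exact Finset.sum_nonneg fun i _ => hρnn _ _
    have hTbdd : ∀ x, BddBelow (T x) := fun x => ⟨0, fun t ht => hTnn x t ht⟩
    set f : X → ℝ := fun x => sInf (T x) with hfdef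
    have hf0 : ∀ x, 0 ≤ f x := fun x => le_csInf (hTne x) (hTnn x)
    have hfcompl : ∀ y ∈ Bᶜ, f y = 0 := by
      intro y hy
      have h0 : (0:ℝ) ∈ T y := ⟨0, fun _ => y, rfl, hy, by simp⟩
      exact le_antisymm (csInf_le (hTbdd y) h0) (hf0 y)
    have hLip : ∀ x z, f x ≤ ρ x z + f z := by
      intro x z
      have step : ∀ t ∈ T z, f x ≤ ρ x z + t := by
        rintro t ⟨n, c, hc0, hcn, rfl⟩
        have hmem : ρ x z + ∑ i ∈ Finset.range n, ρ (c i) (c (i + 1)) ∈ T x := by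
          have hc' : ∀ i, (fun i => if i = 0 then x else c (i - 1)) (i + 1) = c i := by
            intro i; simp
          refine ⟨n + 1, fun i => if i = 0 then x else c (i - 1), by simp, by simp [hcn], ?_⟩
          rw [Finset.sum_range_succ']
          simp only [hc', if_pos rfl]
          rw [hc0]
          exact add_comm _ _
        exact csInf_le (hTbdd x) hmem
      have : ∀ t ∈ T z, f x - ρ x z ≤ t := fun t ht => by linarith [step t ht]
      have h2 : f x - ρ x z ≤ sInf (T z) := le_csInf (hTne z) this
      linarith
    have hfpos : ∀ x ∈ B, 0 < f x := by
      intro x hx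
      obtain ⟨r, hr, hball⟩ := (hX.induced B).mp hB x hx
      have hbound : ∀ t ∈ T x, r ^ β / 2 ≤ t := by
        rintro t ⟨n, c, hc0, hcn, rfl⟩
        have hdx : r ≤ d (c 0) (c n) := by
          by_contra h
          push_neg at h
          have : d (c n) x < r := by rwa [hq.symm, ← hc0]
          exact hcn (hball this)
        have := chain_ineq' hq hβ hL n c
        have h2 : r ^ β ≤ d (c 0) (c n) ^ β := Real.rpow_le_rpow hr.le hdx hβ.le
        simp only [hρdef]
        linarith
      have : r ^ β / 2 ≤ f x := le_csInf (hTne x) hbound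
      have hrβ : 0 < r ^ β := Real.rpow_pos_of_pos hr _
      linarith
    have hmemB : ∀ x, 0 < f x → x ∈ B := by
      intro x hx
      by_contra h
      rw [hfcompl x h] at hx
      exact lt_irrefl _ hx
    -- openness of super/sub level sets
    have hopen_gt : ∀ a : ℝ, IsOpen {x | a < f x} := by
      intro a
      rw [hX.induced]
      intro x hx
      simp only [Set.mem_setOf_eq] at hx
      refine ⟨(f x - a) ^ (1 / β), Real.rpow_pos_of_pos (by linarith) _, ?_⟩
      intro y hy
      simp only [Set.mem_setOf_eq] at hy ⊢
      have h1 : ρ x y < f x - a := by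
        have h2 : d y x ^ β < ((f x - a) ^ (1 / β)) ^ β :=
          Real.rpow_lt_rpow (hq.nonneg _ _) hy hβ
        rw [← Real.rpow_mul (by linarith), one_div_mul_cancel hβ.ne', Real.rpow_one] at h2
        rw [hρdef]
        simp only []
        rw [hq.symm x y]
        exact h2
      have := hLip x y
      linarith
    have hopen_lt : ∀ b : ℝ, IsOpen {x | f x < b} := by
      intro b
      rw [hX.induced]
      intro x hx
      simp only [Set.mem_setOf_eq] at hx
      refine ⟨(b - f x) ^ (1 / β), Real.rpow_pos_of_pos (by linarith) _, ?_⟩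
      intro y hy
      simp only [Set.mem_setOf_eq] at hy ⊢
      have h1 : ρ y x < b - f x := by
        have h2 : d y x ^ β < ((b - f x) ^ (1 / β)) ^ β :=
          Real.rpow_lt_rpow (hq.nonneg _ _) hy hβ
        rw [← Real.rpow_mul (by linarith), one_div_mul_cancel hβ.ne', Real.rpow_one] at h2
        exact h2
      have := hLip y x
      linarith
    -- the pieces, indexed by ℤ
    set ω' : ℤ → Set X := fun n => {x | (2:ℝ) ^ n < f x ∧ f x ≤ (2:ℝ) ^ (n + 1)} with hω'def
    set V' : ℤ → Set X := fun n => {x | (2:ℝ) ^ (n - 1) < f x} ∩ {x | f x < (2:ℝ) ^ (n + 2)}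
      with hV'def
    have hz2 : ∀ n : ℤ, (0:ℝ) < 2 ^ n := fun n => zpow_pos two_pos n
    have hzmono : ∀ m n : ℤ, m ≤ n → (2:ℝ) ^ m ≤ 2 ^ n :=
      fun m n h => zpow_le_zpow_right₀ one_le_two h
    have hω'B : ∀ n, ω' n ⊆ B := by
      intro n x hx
      exact hmemB x (lt_trans (hz2 n) hx.1)
    have hV'B : ∀ n, V' n ⊆ B := by
      intro n x hx
      exact hmemB x (lt_trans (hz2 (n - 1)) hx.1)
    set e : ℕ ≃ ℤ := (Denumerable.eqv ℤ).symm with hedef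
    refine ⟨fun k => ω' (e k), fun k => V' (e k), ?_, ?_, ?_, ?_, ?_, ?_, ?_⟩
    · -- Borel
      intro k
      have hgen : ∀ s : Set X, IsOpen s → MeasurableSet[borel X] s :=
        fun s hs => MeasurableSpace.measurableSet_generateFrom hs
      have h1 : MeasurableSet[borel X] {x | (2:ℝ) ^ (e k) < f x} := hgen _ (hopen_gt _)
      have h2 : MeasurableSet[borel X] {x | (2:ℝ) ^ (e k + 1) < f x} := hgen _ (hopen_gt _)
      show MeasurableSet[borel X] (ω' (e k))
      have heq : ω' (e k) = {x | (2:ℝ) ^ (e k) < f x} \ {x | (2:ℝ) ^ (e k + 1) < f x} := by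
        ext x
        simp only [hω'def, Set.mem_setOf_eq, Set.mem_diff, not_lt]
      rw [heq]
      exact h1.diff h2
    · -- pairwise disjoint
      intro i j hij
      have hne : e i ≠ e j := fun h => hij (e.injective h)
      rw [Set.disjoint_left]
      intro x hxi hxj
      rcases lt_or_gt_of_ne hne with h | h
      · have : (2:ℝ) ^ (e i + 1) ≤ 2 ^ (e j) := hzmono _ _ (by omega)
        have := hxi.2.trans this
        exact absurd hxj.1 (not_lt.mpr this)
      · have : (2:ℝ) ^ (e j + 1) ≤ 2 ^ (e i) := hzmono _ _ (by omega)
        have := hxj.2.trans this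
        exact absurd hxi.1 (not_lt.mpr this)
    · -- union
      apply subset_antisymm
      · exact Set.iUnion_subset fun k => hω'B _
      · intro x hx
        obtain ⟨n, hn⟩ := exists_mem_Ioc_zpow (hfpos x hx) (one_lt_two (α := ℝ))
        exact Set.mem_iUnion.mpr ⟨e.symm n, by
          simp only [hω'def, Equiv.apply_symm_apply, Set.mem_setOf_eq]
          exact ⟨hn.1, hn.2⟩⟩
    · -- open
      intro k
      exact (hopen_gt _).inter (hopen_lt _)
    · -- SetSep
      intro k
      set n : ℤ := e k
      refine ⟨((2:ℝ) ^ (n - 1)) ^ (1 / β), Real.rpow_pos_of_pos (hz2 _) _, ?_⟩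
      intro x hx y hy
      simp only [hω'def, Set.mem_setOf_eq] at hx
      have hy' : f y ≤ (2:ℝ) ^ (n - 1) ∨ (2:ℝ) ^ (n + 2) ≤ f y := by
        simp only [hV'def, Set.mem_compl_iff, Set.mem_inter_iff, Set.mem_setOf_eq,
          not_and_or, not_lt] at hy
        exact hy
      have key : (2:ℝ) ^ (n - 1) ≤ d x y ^ β := by
        rcases hy' with h | h
        · -- f x - f y ≥ 2^n - 2^(n-1) = 2^(n-1)
          have h1 := hLip x y
          have h2 : (2:ℝ) ^ n - 2 ^ (n - 1) = 2 ^ (n - 1) := by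
            have h := zpow_add_one₀ (two_ne_zero : (2:ℝ) ≠ 0) (n - 1)
            rw [show n - 1 + 1 = n from by ring] at h
            rw [h]; ring
          have : (2:ℝ) ^ (n - 1) ≤ f x - f y := by
            have := hx.1
            linarith [hzmono (n-1) n (by omega)]
          simp only [hρdef] at h1
          linarith
        · have h1 := hLip y x
          have h2 : (2:ℝ) ^ (n + 2) - 2 ^ (n + 1) = 2 ^ (n + 1) := by
            have h := zpow_add_one₀ (two_ne_zero : (2:ℝ) ≠ 0) (n + 1)
            rw [show n + 1 + 1 = n + 2 from by ring] at h
            rw [h]; ring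
          have h3 : (2:ℝ) ^ (n - 1) ≤ 2 ^ (n + 1) := hzmono _ _ (by omega)
          have h4 : (2:ℝ) ^ (n + 1) ≤ f y - f x := by linarith [hx.2]
          simp only [hρdef] at h1
          rw [hq.symm y x] at h1
          linarith
      have hd : 0 ≤ d x y := hq.nonneg x y
      calc ((2:ℝ) ^ (n - 1)) ^ (1 / β) ≤ (d x y ^ β) ^ (1 / β) :=
            Real.rpow_le_rpow (hz2 _).le key (by positivity)
      _ = d x y := by
          rw [← Real.rpow_mul hd, mul_one_div_cancel hβ.ne', Real.rpow_one]
    · -- V ⊆ B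
      intro k
      exact hV'B _
    · -- finite overlap
      intro k
      apply Set.Finite.subset ((Set.finite_Icc (e k - 2) (e k + 2)).preimage
        (e.injective.injOn))
      intro j hj
      simp only [Set.mem_setOf_eq] at hj
      obtain ⟨x, hx1, hx2⟩ := hj
      simp only [hV'def, Set.mem_inter_iff, Set.mem_setOf_eq] at hx1 hx2
      simp only [Set.mem_preimage, Set.mem_Icc]
      constructor
      · -- e k - 2 ≤ e j
        by_contra h
        push_neg at h
        have : (2:ℝ) ^ (e j + 2) ≤ 2 ^ (e k - 1) := hzmono _ _ (by omega)
        linarith [hx1.2, hx2.1, this]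
      · by_contra h
        push_neg at h
        have : (2:ℝ) ^ (e k + 2) ≤ 2 ^ (e j - 1) := hzmono _ _ (by omega)
        linarith [hx1.1, hx2.2, this]
end

section
/- Let (X,d,μ) be a space of homogeneous type and let U_n : L¹(X) → M(X) be a sequence of linear operators satisfying properties (P1) and (P3). If G ⊆ X is an open set of finite measure and F ⋐ G is measurable, then d_G(F) = sup_{n∈ℕ} sup_{x∈Gᶜ} sup_{‖f‖_{L¹}≤1} |U_n(f·𝟙_F)(x)| < ∞. -/
open MeasureTheory Filter Set Topology
open scoped ENNReal

variable {X : Type*}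

/-- **Lemma 5.**  Under (P1) and (P3), if `G` is open of finite measure and
`F ⋐ G` is measurable, then
`d_G(F) = sup_n sup_{x ∈ Gᶜ} sup_{‖f‖₁ ≤ 1} |U n (f·𝟙_F)(x)| < ∞`. -/
theorem stmt9 [TopologicalSpace X] [MeasurableSpace X] (d : X → X → ℝ) (μ : Measure X)
    (K : ℝ) (C : ℝ≥0∞) (hX : IsHomType d μ K C)
    (U : ℕ → (X → ℝ) → X → ℝ) (hU : OpSeq μ U)
    (h1 : PropP1 μ U) (h3 : PropP3 d μ U)
    (G : Set X) (hG : IsOpen G) (hGfin : μ G < ⊤)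
    (F : Set X) (hFm : MeasurableSet F) (hFG : SetSep d F Gᶜ) :
    ∃ Cb : ℝ, ∀ n : ℕ, ∀ x ∈ Gᶜ, ∀ f : X → ℝ, Integrable f μ →
      (∫ y, |f y| ∂μ) ≤ 1 → |U n (F.indicator f) x| ≤ Cb := by

  classical
  obtain ⟨δ, hδ, hsep⟩ := hFG
  have hK : (1:ℝ) ≤ K := hX.quasi.one_le_K
  have hK0 : (0:ℝ) < K := lt_of_lt_of_le one_pos hK
  have hdnn := hX.quasi.nonneg
  have hdsymm := hX.quasi.symm
  have hdtri := hX.quasi.triangle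
  -- the auxiliary open set W
  set W : Set X := {y | ∃ r > 0, ∀ w, d w y < r → ∀ z ∈ F, δ / (4*K^2) ≤ d w z} with hWdef
  have hWopen : IsOpen W := by
    rw [hX.induced]
    rintro y ⟨r, hr, hb⟩
    refine ⟨r / (2*K), by positivity, ?_⟩
    intro w hw
    refine ⟨r / (2*K), by positivity, ?_⟩
    intro v hv z hz
    refine hb v ?_ z hz
    have h1 : d v y ≤ K * (d v w + d w y) := hdtri v y w
    have hv' : d w v * (2*K) < r := by
      rw [← lt_div_iff₀ (by positivity)]; rw [hdsymm w v]; exact hv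
    have hw' : d w y * (2*K) < r := by
      rw [← lt_div_iff₀ (by positivity)]; exact hw
    nlinarith [hdnn v w, hdnn w y, hdsymm v w]
  have hWF : ∀ z ∈ F, z ∉ W := by
    rintro z hz ⟨r, hr, hb⟩
    have h0 : d z z = 0 := (hX.quasi.eq_zero_iff z z).mpr rfl
    have := hb z (by rw [h0]; exact hr) z hz
    rw [h0] at this
    have hpos : 0 < δ / (4*K^2) := by positivity
    linarith
  have hGW : SetSep d Gᶜ Wᶜ := by
    refine ⟨δ / (2*K), by positivity, ?_⟩
    intro x hx y hy
    by_contra hlt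
    push_neg at hlt
    apply hy
    refine ⟨δ / (8*K^2), by positivity, ?_⟩
    intro w hw z hz
    have h1 : δ ≤ d z x := hsep z hz x hx
    have h2 : d z x ≤ K * (d z y + d y x) := hdtri z x y
    have h3 : d y x * (2*K) < δ := by
      rw [← lt_div_iff₀ (by positivity)]; rw [hdsymm y x]; exact hlt
    have h4 : d z y ≤ K * (d z w + d w y) := hdtri z y w
    have h4' : K * d z y ≤ K * (K * (d z w + d w y)) :=
      mul_le_mul_of_nonneg_left h4 hK0.le
    have h5 : d w y * (8*K^2) < δ := by
      rw [← lt_div_iff₀ (by positivity)]; exact hw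
    rw [hdsymm w z, div_le_iff₀ (by positivity)]
    nlinarith [hdnn z w, hdnn w y, hdnn z y, hdnn y x, sq_nonneg K]
  -- the bounds from (P1)
  choose ρ hρ using h1
  -- linearity helpers
  have hlinadd : ∀ n (f g : X → ℝ), Integrable f μ → Integrable g μ →
      U n (fun x => f x + g x) = fun x => U n f x + U n g x := by
    intro n f g hf hg
    have := hU.lin n f g 1 1 hf hg
    simpa using this
  have hlinsmul : ∀ n (f : X → ℝ) (a : ℝ), Integrable f μ →
      U n (fun x => a * f x) = fun x => a * U n f x := by
    intro n f a hf
    have := hU.lin n f f a 0 hf hf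
    simpa using this
  have hindint : ∀ (f : X → ℝ), Integrable f μ → Integrable (F.indicator f) μ :=
    fun f hf => hf.indicator hFm
  have hindle : ∀ (g : X → ℝ), Integrable g μ →
      (∫ y, |F.indicator g y| ∂μ) ≤ ∫ y, |g y| ∂μ := by
    intro g hg
    refine integral_mono ((hindint g hg).abs) (hg.abs) ?_
    intro y
    by_cases h : y ∈ F
    · simp [Set.indicator_of_mem, h]
    · simp [Set.indicator_of_notMem, h, abs_nonneg]
  -- the continuous linear maps
  have hTlin : ∀ (n : ℕ) (x : X), ∃ T : (X →₁[μ] ℝ) →L[ℝ] ℝ,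
      ∀ f : X →₁[μ] ℝ, T f = U n (F.indicator ⇑f) x := by
    intro n x
    have key : ∀ f : X →₁[μ] ℝ, ∀ y : X,
        |U n (F.indicator ⇑f) y| ≤ ρ n * ∫ z, |F.indicator (⇑f) z| ∂μ :=
      fun f y => hρ n (F.indicator ⇑f) (hindint _ (L1.integrable_coeFn f)) y
    refine ⟨LinearMap.mkContinuous
      { toFun := fun f => U n (F.indicator ⇑f) x
        map_add' := ?_
        map_smul' := ?_ } (|ρ n|) ?_, fun f => rfl⟩
    · intro f g
      have hfi : Integrable (⇑f) μ := L1.integrable_coeFn f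
      have hgi : Integrable (⇑g) μ := L1.integrable_coeFn g
      have hae : F.indicator ⇑(f+g) =ᵐ[μ]
          fun y => F.indicator (⇑f) y + F.indicator (⇑g) y := by
        filter_upwards [Lp.coeFn_add f g] with y hy
        by_cases hyF : y ∈ F
        · simp only [Set.indicator_of_mem hyF]; exact hy
        · simp [Set.indicator_of_notMem, hyF]
      have e1 : U n (F.indicator ⇑(f+g)) =
          U n (fun y => F.indicator (⇑f) y + F.indicator (⇑g) y) :=
        hU.congr n _ _ (hindint _ (L1.integrable_coeFn (f+g))) hae
      have e2 : U n (fun y => F.indicator (⇑f) y + F.indicator (⇑g) y) =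
          fun y => U n (F.indicator ⇑f) y + U n (F.indicator ⇑g) y :=
        hlinadd n _ _ (hindint _ hfi) (hindint _ hgi)
      simp only [e1, e2]
    · intro a f
      have hfi : Integrable (⇑f) μ := L1.integrable_coeFn f
      have hae : F.indicator ⇑(a • f) =ᵐ[μ] fun y => a * F.indicator (⇑f) y := by
        filter_upwards [Lp.coeFn_smul a f] with y hy
        by_cases hyF : y ∈ F
        · simp only [Set.indicator_of_mem hyF]; exact hy
        · simp [Set.indicator_of_notMem, hyF]
      have e1 : U n (F.indicator ⇑(a • f)) = U n (fun y => a * F.indicator (⇑f) y) :=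
        hU.congr n _ _ (hindint _ (L1.integrable_coeFn (a • f))) hae
      have e2 : U n (fun y => a * F.indicator (⇑f) y) =
          fun y => a * U n (F.indicator ⇑f) y := hlinsmul n _ a (hindint _ hfi)
      simp only [e1, e2, RingHom.id_apply, smul_eq_mul]
    · intro f
      have hfi : Integrable (⇑f) μ := L1.integrable_coeFn f
      have h1 : |U n (F.indicator ⇑f) x| ≤ ρ n * ∫ z, |F.indicator (⇑f) z| ∂μ :=
        key f x
      have hInn : 0 ≤ ∫ z, |F.indicator (⇑f) z| ∂μ :=
        integral_nonneg fun z => abs_nonneg _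
      have h2 : (∫ z, |F.indicator (⇑f) z| ∂μ) ≤ ∫ z, |f z| ∂μ := hindle _ hfi
      have h3 : (∫ z, |f z| ∂μ) = ‖f‖ := by
        rw [L1.norm_eq_integral_norm]
        simp [Real.norm_eq_abs]
      simp only [Real.norm_eq_abs]
      calc |U n (F.indicator ⇑f) x| ≤ ρ n * ∫ z, |F.indicator (⇑f) z| ∂μ := h1
        _ ≤ |ρ n| * ∫ z, |F.indicator (⇑f) z| ∂μ :=
            mul_le_mul_of_nonneg_right (le_abs_self _) hInn
        _ ≤ |ρ n| * ∫ z, |f z| ∂μ :=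
            mul_le_mul_of_nonneg_left h2 (abs_nonneg _)
        _ = |ρ n| * ‖f‖ := by rw [h3]
  choose T hT using fun p : ℕ × X => hTlin p.1 p.2
  -- pointwise uniform boundedness via (P3)
  have hptwise : ∀ f : X →₁[μ] ℝ, ∃ Cf : ℝ, ∀ p : ℕ × {x : X // x ∈ Gᶜ},
      ‖T (p.1, (p.2 : X)) f‖ ≤ Cf := by
    intro f
    set f' : X → ℝ := F.indicator ⇑f with hf'def
    have hf'i : Integrable f' μ := hindint _ (L1.integrable_coeFn f)
    have hf'W : ∀ y ∈ W, f' y = 0 := by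
      intro y hy
      have : y ∉ F := fun hyF => hWF y hyF hy
      simp [hf'def, Set.indicator_of_notMem, this]
    obtain ⟨g, hg⟩ := h3 f' hf'i W hWopen 0 hf'W Gᶜ hGW
    rw [Metric.tendstoUniformlyOn_iff] at hg
    obtain ⟨N, hN⟩ := (hg 1 one_pos).exists_forall_of_atTop
    set I : ℝ := ∫ y, |f' y| ∂μ with hIdef
    have hI0 : 0 ≤ I := integral_nonneg fun y => abs_nonneg _
    refine ⟨(∑ k ∈ Finset.range (N+1), |ρ k|) * I + 2, ?_⟩
    rintro ⟨n, x, hx⟩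
    have hUb : ∀ m, |U m f' x| ≤ ρ m * I := fun m => hρ m f' hf'i x
    have hsumnn : ∀ k, k ∈ Finset.range (N+1) → |ρ k| ≤
        ∑ j ∈ Finset.range (N+1), |ρ j| := by
      intro k hk
      exact Finset.single_le_sum (fun j _ => abs_nonneg (ρ j)) hk
    have hbnd : ∀ m, m ∈ Finset.range (N+1) → |U m f' x| ≤
        (∑ j ∈ Finset.range (N+1), |ρ j|) * I := by
      intro m hm
      calc |U m f' x| ≤ ρ m * I := hUb m
        _ ≤ |ρ m| * I := mul_le_mul_of_nonneg_right (le_abs_self _) hI0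
        _ ≤ (∑ j ∈ Finset.range (N+1), |ρ j|) * I :=
            mul_le_mul_of_nonneg_right (hsumnn m hm) hI0
    have hTval : T ((n : ℕ), (x : X)) f = U n f' x := hT (n, x) f
    rw [Real.norm_eq_abs, hTval]
    rcases le_or_gt n N with hnN | hnN
    · have := hbnd n (Finset.mem_range.mpr (Nat.lt_succ_of_le hnN))
      linarith
    · have hdist1 : dist (g x) (U n f' x) < 1 := hN n hnN.le x hx
      have hdist2 : dist (g x) (U N f' x) < 1 := hN N le_rfl x hx
      have hgx : |g x| ≤ |U N f' x| + 1 := by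
        have := abs_sub_abs_le_abs_sub (g x) (U N f' x)
        rw [Real.dist_eq] at hdist2
        linarith
      have hUn : |U n f' x| ≤ |g x| + 1 := by
        have := abs_sub_abs_le_abs_sub (U n f' x) (g x)
        rw [Real.dist_eq, abs_sub_comm] at hdist1
        linarith
      have hN' := hbnd N (Finset.mem_range.mpr (Nat.lt_succ_of_le le_rfl))
      linarith
  -- Banach–Steinhaus
  have hbs : ∃ C', ∀ p : ℕ × {x : X // x ∈ Gᶜ},
      ‖T (p.1, (p.2 : X))‖ ≤ C' := by
    exact banach_steinhaus hptwise
  obtain ⟨C', hC'⟩ := hbs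
  refine ⟨max C' 0, ?_⟩
  intro n x hx f hf hf1
  set fL : X →₁[μ] ℝ := hf.toL1 f with hfLdef
  have hae : F.indicator f =ᵐ[μ] F.indicator ⇑fL := by
    filter_upwards [hf.coeFn_toL1] with y hy
    by_cases hyF : y ∈ F
    · simp only [Set.indicator_of_mem hyF]; exact hy.symm
    · simp [Set.indicator_of_notMem, hyF]
  have e1 : U n (F.indicator f) = U n (F.indicator ⇑fL) :=
    hU.congr n _ _ (hindint f hf) hae
  have hfLnorm : ‖fL‖ ≤ 1 := by
    rw [L1.norm_eq_integral_norm]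
    have : (∫ y, ‖fL y‖ ∂μ) = ∫ y, |f y| ∂μ := by
      refine integral_congr_ae ?_
      filter_upwards [hf.coeFn_toL1] with y hy
      rw [hy, Real.norm_eq_abs]
    rw [this]; exact hf1
  have hTval : T ((n : ℕ), x) fL = U n (F.indicator ⇑fL) x := hT (n, x) fL
  have hle : |U n (F.indicator ⇑fL) x| ≤ ‖T ((n : ℕ), x)‖ * ‖fL‖ := by
    rw [← hTval, ← Real.norm_eq_abs]
    exact (T ((n : ℕ), x)).le_opNorm fL
  have hTnorm : ‖T ((n : ℕ), x)‖ ≤ max C' 0 :=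
    le_trans (hC' (n, ⟨x, hx⟩)) (le_max_left _ _)
  calc |U n (F.indicator f) x| = |U n (F.indicator ⇑fL) x| := by rw [e1]
    _ ≤ ‖T ((n : ℕ), x)‖ * ‖fL‖ := hle
    _ ≤ max C' 0 * 1 :=
        mul_le_mul hTnorm hfLnorm (norm_nonneg _) (le_max_right _ _)
    _ = max C' 0 := mul_one _
end
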